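/- arXiv:1603.07271 — 3 statements merged into one kernel-verified Lean document; each statement's English description precedes it below -/
import Mathlib

section
/- Let (M, G, ⇀) be a left homogeneous space, let K = (m₀, (g_{m₀,m})_{m∈M}) and K' = (m₀', (g'_{m₀',m})_{m∈M}) be two coordinate systems for it, let H be a subgroup of G containing all coordinates g_{m₀,m} and all coordinates g'_{m₀',m}, and let h ∈ H satisfy h ⇀ m₀ = m₀'. Write G₀ and G₀' for the stabilisers of m₀ and m₀', write ⋊ and ⋊' for the right semi-actions induced by K and K' respectively, and write H₀ = H ∩ G₀. Then for every m ∈ M there exists h₀ ∈ H₀ such that for every coset gG₀' ∈ G/G₀' one has m ⋊' gG₀' = m ⋊ (h₀ h⁻¹ g h G₀). -/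
/-!
The coordinates `g_{m₀,m}` and `g'_{m₀',m} h` both carry `m₀` to `m`, so
`h₀ := g_{m₀,m}⁻¹ g'_{m₀',m} h` lies in `H ∩ G₀`. Since `g_{m₀,m} h₀ = g'_{m₀',m} h`, both sides of
the identity equal `g'_{m₀',m} g h ⇀ m₀`.
-/

open MulAction

/-- The right quotient-set semi-action `⋊` induced by a coordinate system
`(m₀, coord)`: `m ⋊ gG₀ = (coord m * g) • m₀`. -/
def semiAct {G M : Type*} [Group G] [MulAction G M] (m₀ : M) (coord : M → G)
    (m : M) (𝔤 : G ⧸ stabilizer G m₀) : M :=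
  coord m • ofQuotientStabilizer G m₀ 𝔤

section

variable {G M : Type*} [Group G] [MulAction G M]

theorem inv_mul_mem_stabilizer_of_smul_eq {a b : G} {x y : M} (ha : a • x = y) (hb : b • x = y) :
    a⁻¹ * b ∈ stabilizer G x := by
  rw [mem_stabilizer_iff, mul_smul, inv_smul_eq_iff, ha, hb]

theorem semiAct_mk (m₀ : M) (coord : M → G) (m : M) (g : G) :
    semiAct m₀ coord m (QuotientGroup.mk g) = (coord m * g) • m₀ := by
  rw [semiAct, ofQuotientStabilizer_mk, mul_smul]

theorem semiAct_mk_of_smul_eq {m₀ m₀' : M} {h : G} (hh : h • m₀ = m₀') (coord' : M → G)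
    (m : M) (g : G) :
    semiAct m₀' coord' m (QuotientGroup.mk g) = (coord' m * g * h) • m₀ := by
  rw [semiAct_mk, mul_smul _ h, hh]

end

theorem semiAct_change_of_coordinates_general {G M : Type*} [Group G] [MulAction G M]
    (m₀ : M) (coord : M → G)
    (hc : ∀ m : M, coord m • m₀ = m)
    (m₀' : M) (coord' : M → G)
    (hc' : ∀ m : M, coord' m • m₀' = m)
    (H : Subgroup G) (hH : ∀ m : M, coord m ∈ H) (hH' : ∀ m : M, coord' m ∈ H)
    (h : G) (hhH : h ∈ H) (hh : h • m₀ = m₀') :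
    ∀ m : M, ∃ h₀ ∈ H, h₀ ∈ stabilizer G m₀ ∧
      ∀ g : G,
        semiAct m₀' coord' m (QuotientGroup.mk g)
          = semiAct m₀ coord m (QuotientGroup.mk (h₀ * h⁻¹ * g * h)) := by
  intro m
  have hcoord'h : (coord' m * h) • m₀ = m := by rw [mul_smul, hh, hc']
  refine ⟨(coord m)⁻¹ * (coord' m * h), mul_mem (inv_mem (hH m)) (mul_mem (hH' m) hhH),
    inv_mul_mem_stabilizer_of_smul_eq (hc m) hcoord'h, fun g => ?_⟩
  rw [semiAct_mk_of_smul_eq hh, semiAct_mk]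
  group

/-- Let `(M, G, ⇀)` be a left homogeneous space, let `K = (m₀, (g_{m₀,m})_m)` and
`K' = (m₀', (g'_{m₀',m})_m)` be two coordinate systems for it, let `H` be a subgroup
of `G` containing all coordinates of `K` and of `K'`, and let `h ∈ H` satisfy
`h ⇀ m₀ = m₀'`.  Then for every `m ∈ M` there exists `h₀ ∈ H₀ = H ∩ G₀` such that
for every coset `gG₀' ∈ G/G₀'` one has `m ⋊' gG₀' = m ⋊ (h₀ h⁻¹ g h G₀)`. -/
theorem semiAct_change_of_coordinates {G M : Type*} [Group G] [MulAction G M]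
    (htrans : ∀ m m' : M, ∃ g : G, g • m = m')
    (m₀ : M) (coord : M → G)
    (hc : ∀ m : M, coord m • m₀ = m) (hc0 : coord m₀ = 1)
    (m₀' : M) (coord' : M → G)
    (hc' : ∀ m : M, coord' m • m₀' = m) (hc0' : coord' m₀' = 1)
    (H : Subgroup G) (hH : ∀ m : M, coord m ∈ H) (hH' : ∀ m : M, coord' m ∈ H)
    (h : G) (hhH : h ∈ H) (hh : h • m₀ = m₀') :
    ∀ m : M, ∃ h₀ ∈ H, h₀ ∈ stabilizer G m₀ ∧
      ∀ g : G,
        semiAct m₀' coord' m (QuotientGroup.mk g)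
          = semiAct m₀ coord m (QuotientGroup.mk (h₀ * h⁻¹ * g * h)) :=
  semiAct_change_of_coordinates_general m₀ coord hc m₀' coord' hc' H hH hH' h hhH hh
end

section
/- Let 𝓡 be a cell space, let (Q, N, δ) be a semi-cellular automaton over 𝓡 with global transition function Δ, and let H be a subgroup of G with {g_{m₀,m} : m ∈ M} ⊆ H. Then the local transition function δ is •_{H₀}-invariant if and only if the global transition function Δ is ⇀_H-equivariant. -/
open MulAction

/-- The left action `•` of the stabiliser `G₀` on local configurations `ℓ ∈ Q^N`,
`(g₀ • ℓ)(n) = ℓ(g₀⁻¹ · n)`. -/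
def bulletAct {G M : Type*} [Group G] [MulAction G M] {m₀ : M}
    {N : Set (G ⧸ stabilizer G m₀)}
    (hN : ∀ g₀ ∈ stabilizer G m₀, ∀ n ∈ N, g₀ • n ∈ N) {Q : Type*}
    (g₀ : G) (hg₀ : g₀ ∈ stabilizer G m₀) (ℓ : N → Q) : N → Q :=
  fun n => ℓ ⟨g₀⁻¹ • (n : G ⧸ stabilizer G m₀), hN g₀⁻¹ (inv_mem hg₀) _ n.2⟩

/-- The left action `⇀` of `G` on global configurations `c ∈ Q^M`,
`(g ⇀ c)(m) = c(g⁻¹ ⇀ m)`. -/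
def shiftConf {G M : Type*} [Group G] [MulAction G M] {Q : Type*}
    (g : G) (c : M → Q) : M → Q :=
  fun m => c (g⁻¹ • m)

/-- The global transition function `Δ` of the semi-cellular automaton `(Q, N, δ)`:
`Δ(c)(m) = δ(n ↦ c(m ⋊ n))`. -/
def globalTrans {G M : Type*} [Group G] [MulAction G M] (m₀ : M) (coord : M → G)
    {Q : Type*} (N : Set (G ⧸ stabilizer G m₀)) (δ : (N → Q) → Q)
    (c : M → Q) : M → Q :=
  fun m => δ fun n => c (semiAct m₀ coord m (n : G ⧸ stabilizer G m₀))

/-!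
At a cell `m`, `Δ(h ⇀ c)` reads `c` through `h⁻¹ g_{m₀,m}`, while `(h ⇀ Δ(c))(m) = Δ(c)(h⁻¹ ⇀ m)`
reads it through `g_{m₀,h⁻¹⇀m}`. These differ by right multiplication with
`g₀ = g_{m₀,m}⁻¹ h g_{m₀,h⁻¹⇀m} ∈ H₀`, so the two local configurations differ by `g₀ •`.
Conversely, `G/G₀ → M` is injective, so every local configuration is seen at `m₀` by some global
configuration, and equivariance at `m₀` under `h₀ ∈ H₀` is exactly invariance under `h₀`.
-/

section

variable {G M : Type*} [Group G] [MulAction G M] {m₀ : M} {coord : M → G}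
  {N : Set (G ⧸ stabilizer G m₀)} {Q : Type*}

variable (m₀ coord N) in
def localConf (c : M → Q) (m : M) : N → Q :=
  fun n => c (semiAct m₀ coord m n)

theorem globalTrans_apply (δ : (N → Q) → Q) (c : M → Q) (m : M) :
    globalTrans m₀ coord N δ c m = δ (localConf m₀ coord N c m) :=
  rfl

theorem semiAct_smul (m : M) (g : G) (𝔤 : G ⧸ stabilizer G m₀) :
    semiAct m₀ coord m (g • 𝔤) = (coord m * g) • ofQuotientStabilizer G m₀ 𝔤 := by
  rw [semiAct, ofQuotientStabilizer_smul, smul_smul]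

theorem localConf_shiftConf (hN : ∀ g₀ ∈ stabilizer G m₀, ∀ n ∈ N, g₀ • n ∈ N)
    {g g₀ : G} (hg₀ : g₀ ∈ stabilizer G m₀) {m m' : M} (hm' : coord m' = g⁻¹ * coord m * g₀)
    (c : M → Q) :
    localConf m₀ coord N (shiftConf g c) m = bulletAct hN g₀ hg₀ (localConf m₀ coord N c m') := by
  funext n
  change c (g⁻¹ • semiAct m₀ coord m n) = c (semiAct m₀ coord m' (g₀⁻¹ • (n : G ⧸ _)))
  rw [semiAct_smul, hm', mul_inv_cancel_right, mul_smul, semiAct]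

theorem coord_inv_mul_mul_coord_mem_stabilizer (hc : ∀ m : M, coord m • m₀ = m) (g : G) (m : M) :
    (coord m)⁻¹ * g * coord (g⁻¹ • m) ∈ stabilizer G m₀ := by
  rw [mem_stabilizer_iff, mul_smul, mul_smul, hc, smul_inv_smul, inv_smul_eq_iff, hc]

theorem localConf_origin (hc0 : coord m₀ = 1) (c : M → Q) :
    localConf m₀ coord N c m₀ = fun n : N => c (ofQuotientStabilizer G m₀ n) := by
  funext n
  rw [localConf, semiAct, hc0, one_smul]

variable (N) in
theorem exists_localConf_origin_eq [Nonempty Q] (hc0 : coord m₀ = 1) (ℓ : N → Q) :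
    ∃ c : M → Q, localConf m₀ coord N c m₀ = ℓ := by
  obtain ⟨c, hc⟩ :=
    ((injective_ofQuotientStabilizer G m₀).comp Subtype.val_injective).surjective_comp_right ℓ
  exact ⟨c, (localConf_origin hc0 c).trans hc⟩

end

theorem local_invariance_iff_global_equivariance_general {G M : Type*} [Group G] [MulAction G M]
    (m₀ : M) (coord : M → G)
    (hc : ∀ m : M, coord m • m₀ = m) (hc0 : coord m₀ = 1)
    {Q : Type*} (N : Set (G ⧸ stabilizer G m₀))
    (hN : ∀ g₀ ∈ stabilizer G m₀, ∀ n ∈ N, g₀ • n ∈ N)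
    (δ : (N → Q) → Q)
    (H : Subgroup G) (hH : ∀ m : M, coord m ∈ H) :
    (∀ h₀ : G, h₀ ∈ H → ∀ hs : h₀ ∈ stabilizer G m₀,
        ∀ ℓ : N → Q, δ (bulletAct hN h₀ hs ℓ) = δ ℓ)
      ↔ (∀ h ∈ H, ∀ c : M → Q,
          globalTrans m₀ coord N δ (shiftConf h c)
            = shiftConf h (globalTrans m₀ coord N δ c)) := by
  constructor
  · intro hδ h hh c
    funext m
    have hg₀H : (coord m)⁻¹ * h * coord (h⁻¹ • m) ∈ H :=
      mul_mem (mul_mem (inv_mem (hH m)) hh) (hH _)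
    rw [globalTrans_apply, localConf_shiftConf hN (coord_inv_mul_mul_coord_mem_stabilizer hc h m)
      (m' := h⁻¹ • m) (by group), hδ _ hg₀H]
    rfl
  · intro hΔ h₀ hh₀ hs ℓ
    rcases isEmpty_or_nonempty Q
    -- then `N` is empty as well, so `ℓ` is the only local configuration
    · exact congrArg δ (Subsingleton.elim _ _)
    obtain ⟨c, rfl⟩ := exists_localConf_origin_eq N hc0 ℓ
    have hfix : h₀⁻¹ • m₀ = m₀ := inv_smul_eq_iff.mpr (mem_stabilizer_iff.mp hs).symm
    have := congrFun (hΔ h₀ hh₀ c) m₀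
    rwa [globalTrans_apply, localConf_shiftConf hN hs (m' := m₀) (by simp [hc0]), shiftConf,
      hfix] at this

/-- Let `𝓡` be a cell space, let `(Q, N, δ)` be a semi-cellular automaton over `𝓡`
with global transition function `Δ`, and let `H` be a subgroup of `G` with
`{g_{m₀,m} : m ∈ M} ⊆ H`.  Then the local transition function `δ` is
`•_{H₀}`-invariant if and only if the global transition function `Δ` is
`⇀_H`-equivariant. -/
theorem local_invariance_iff_global_equivariance {G M : Type*} [Group G] [MulAction G M]
    (htrans : ∀ m m' : M, ∃ g : G, g • m = m')
    (m₀ : M) (coord : M → G)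
    (hc : ∀ m : M, coord m • m₀ = m) (hc0 : coord m₀ = 1)
    {Q : Type*} (N : Set (G ⧸ stabilizer G m₀))
    (hN : ∀ g₀ ∈ stabilizer G m₀, ∀ n ∈ N, g₀ • n ∈ N)
    (δ : (N → Q) → Q)
    (H : Subgroup G) (hH : ∀ m : M, coord m ∈ H) :
    (∀ h₀ : G, h₀ ∈ H → ∀ hs : h₀ ∈ stabilizer G m₀,
        ∀ ℓ : N → Q, δ (bulletAct hN h₀ hs ℓ) = δ ℓ)
      ↔ (∀ h ∈ H, ∀ c : M → Q,
          globalTrans m₀ coord N δ (shiftConf h c)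
            = shiftConf h (globalTrans m₀ coord N δ c)) :=
  local_invariance_iff_global_equivariance_general m₀ coord hc hc0 N hN δ H hH
end

section
/- (Topological Curtis–Hedlund–Lyndon theorem.) Let 𝓡 be a cell space, let Q be a finite set, let Q^M carry the prodiscrete topology (the product topology with Q discrete), let Δ : Q^M → Q^M be a map, and let H be a subgroup of G with {g_{m₀,m} : m ∈ M} ⊆ H. Then the following are equivalent: (1) Δ is the global transition function of a semi-cellular automaton (Q, N, δ) over 𝓡 whose local transition function δ is •_{H₀}-invariant and which has a finite essential neighbourhood; (2) Δ is ⇀_H-equivariant and continuous. -/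
open MulAction

/-- The prodiscrete topology on `Q^M = M → Q`: the product topology where each
factor `Q` carries the discrete topology. -/
def prodiscreteTopology (Q M : Type*) : TopologicalSpace (M → Q) :=
  @Pi.topologicalSpace M (fun _ => Q) (fun _ => ⊥)

/-!
Over a finite alphabet, continuity for the prodiscrete topology means that every cell of the
image depends on finitely many cells (one direction by compactness of `Q^M`).

(1) ⇒ (2): the cell `m` of `Δ c` only depends on `c` on `m ⋊ E`. For equivariance, with
`g₀ = g_{m₀,h⁻¹⇀m}⁻¹ h⁻¹ g_{m₀,m} ∈ H₀` one has `h⁻¹ ⇀ (m ⋊ n) = (h⁻¹ ⇀ m) ⋊ (g₀ · n)`, and the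
twist by `g₀` is absorbed by the `H₀`-invariance of `δ`.

(2) ⇒ (1): take `N = G/G₀` and `δ ℓ = Δ (m ↦ ℓ (g_{m₀,m} G₀)) m₀`. Equivariance under the
coordinates `g_{m₀,m} ∈ H` transports the value at `m₀` to every cell, equivariance under `H₀`
gives the invariance of `δ`, and a finite set of cells on which `Δ (·) m₀` depends yields a
finite essential neighbourhood.
-/

open Set Filter Topology Function

section Prodiscrete

variable {ι β : Type*} {X : ι → Type*} [∀ i, TopologicalSpace (X i)]

theorem exists_finite_cylinder_subset_of_mem_nhds {x : Π i, X i} {s : Set (Π i, X i)}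
    (hs : s ∈ 𝓝 x) : ∃ I : Set ι, I.Finite ∧ {y | ∀ i ∈ I, y i = x i} ⊆ s := by
  rw [nhds_pi, Filter.mem_pi] at hs
  obtain ⟨I, hI, t, ht, hIt⟩ := hs
  exact ⟨I, hI, fun y hy => hIt fun i hi => hy i hi ▸ mem_of_mem_nhds (ht i)⟩

variable [∀ i, DiscreteTopology (X i)]

theorem cylinder_mem_nhds {I : Set ι} (hI : I.Finite) (x : Π i, X i) :
    {y | ∀ i ∈ I, y i = x i} ∈ 𝓝 x :=
  (isOpen_set_pi hI fun i _ => isOpen_discrete {x i}).mem_nhds fun _ _ => rfl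

theorem Function.DependsOn.continuous_of_finite [TopologicalSpace β] {f : (Π i, X i) → β}
    {I : Set ι} (hf : DependsOn f I) (hI : I.Finite) : Continuous f :=
  IsLocallyConstant.continuous <| (IsLocallyConstant.iff_eventually_eq f).2 fun x =>
    Filter.mem_of_superset (cylinder_mem_nhds hI x) fun _ hy => hf hy

theorem Continuous.exists_finite_dependsOn [∀ i, Finite (X i)] [TopologicalSpace β]
    [DiscreteTopology β] {f : (Π i, X i) → β} (hf : Continuous f) :
    ∃ I : Set ι, I.Finite ∧ DependsOn f I := by
  have hloc (x : Π i, X i) : ∃ I : Set ι, I.Finite ∧ {y | ∀ i ∈ I, y i = x i} ⊆ f ⁻¹' {f x} :=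
    exists_finite_cylinder_subset_of_mem_nhds <|
      ((IsLocallyConstant.iff_continuous f).2 hf).eventually_eq x
  choose I hIfin hI using hloc
  obtain ⟨t, -, hcover⟩ := isCompact_univ.elim_nhds_subcover
    (fun x => {y | ∀ i ∈ I x, y i = x i}) fun x _ => cylinder_mem_nhds (hIfin x) x
  refine ⟨⋃ x ∈ t, I x, t.finite_toSet.biUnion fun x _ => hIfin x, fun y z hyz => ?_⟩
  obtain ⟨x, hxt, hyx⟩ := mem_iUnion₂.1 (hcover (mem_univ y))
  have hzx : ∀ i ∈ I x, z i = x i := fun i hi =>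
    (hyz i (mem_biUnion hxt hi)).symm.trans (hyx i hi)
  exact (hI x hyx).trans (hI x hzx).symm

theorem continuous_pi_iff_forall_exists_finite_dependsOn {κ : Type*} {Y : κ → Type*}
    [∀ i, Finite (X i)] [∀ j, TopologicalSpace (Y j)] [∀ j, DiscreteTopology (Y j)]
    {F : (Π i, X i) → Π j, Y j} :
    Continuous F ↔ ∀ j, ∃ I : Set ι, I.Finite ∧ DependsOn (fun x => F x j) I :=
  continuous_pi_iff.trans <| forall_congr' fun _ =>
    ⟨Continuous.exists_finite_dependsOn, fun ⟨_, hI, hF⟩ => hF.continuous_of_finite hI⟩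

end Prodiscrete

theorem continuous_prodiscrete_iff {M Q : Type*} [Finite Q] {F : (M → Q) → (M → Q)} :
    @Continuous _ _ (prodiscreteTopology Q M) (prodiscreteTopology Q M) F ↔
      ∀ m, ∃ S : Set M, S.Finite ∧ DependsOn (fun c => F c m) S :=
  letI : TopologicalSpace Q := ⊥
  haveI : DiscreteTopology Q := ⟨rfl⟩
  continuous_pi_iff_forall_exists_finite_dependsOn

section CellSpace

variable {G M Q : Type*} [Group G] [MulAction G M] {m₀ : M} {coord : M → G} {H : Subgroup G}

theorem smul_semiAct (g : G) (m : M) (n : G ⧸ stabilizer G m₀) :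
    g • semiAct m₀ coord m n =
      semiAct m₀ coord (g • m) (((coord (g • m))⁻¹ * g * coord m) • n) := by
  simp only [semiAct, ofQuotientStabilizer_smul, ← mul_smul]
  group

theorem coord_smul_inv_mul_mul_coord_mem_stabilizer (hc : ∀ m : M, coord m • m₀ = m)
    (g : G) (m : M) : (coord (g • m))⁻¹ * g * coord m ∈ stabilizer G m₀ := by
  rw [mem_stabilizer_iff, mul_smul, mul_smul, hc, inv_smul_eq_iff, hc]

theorem mk_coord_smul (hc : ∀ m : M, coord m • m₀ = m) (g : G) (m : M) :
    (QuotientGroup.mk (coord (g • m)) : G ⧸ stabilizer G m₀) =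
      g • QuotientGroup.mk (coord m) := by
  rw [MulAction.Quotient.smul_mk, smul_eq_mul, QuotientGroup.eq, ← mul_assoc]
  exact coord_smul_inv_mul_mul_coord_mem_stabilizer hc g m

theorem semiAct_mk_coord (hc : ∀ m : M, coord m • m₀ = m) (m m' : M) :
    semiAct m₀ coord m (QuotientGroup.mk (coord m')) = coord m • m' := by
  rw [semiAct, ofQuotientStabilizer_mk, hc]

theorem globalTrans_shiftConf {N : Set (G ⧸ stabilizer G m₀)} {δ : (N → Q) → Q}
    (hc : ∀ m : M, coord m • m₀ = m) (hH : ∀ m : M, coord m ∈ H)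
    (hN : ∀ g₀ ∈ stabilizer G m₀, ∀ n ∈ N, g₀ • n ∈ N)
    (hδ : ∀ h₀ ∈ H, ∀ hs : h₀ ∈ stabilizer G m₀, ∀ ℓ : N → Q, δ (bulletAct hN h₀ hs ℓ) = δ ℓ)
    {h : G} (hh : h ∈ H) (c : M → Q) :
    globalTrans m₀ coord N δ (shiftConf h c) = shiftConf h (globalTrans m₀ coord N δ c) := by
  funext m
  set g₀ := (coord (h⁻¹ • m))⁻¹ * h⁻¹ * coord m
  have hg₀ : g₀ ∈ stabilizer G m₀ := coord_smul_inv_mul_mul_coord_mem_stabilizer hc h⁻¹ m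
  have hg₀H : g₀ ∈ H := mul_mem (mul_mem (inv_mem (hH _)) (inv_mem hh)) (hH m)
  calc δ (fun n => c (h⁻¹ • semiAct m₀ coord m n))
      = δ (bulletAct hN g₀⁻¹ (inv_mem hg₀) fun n => c (semiAct m₀ coord (h⁻¹ • m) n)) := by
        congr 1
        funext n
        simp only [bulletAct, inv_inv, smul_semiAct, g₀]
    _ = δ (fun n => c (semiAct m₀ coord (h⁻¹ • m) n)) := hδ _ (inv_mem hg₀H) _ _

theorem dependsOn_globalTrans_apply {N : Set (G ⧸ stabilizer G m₀)} {δ : (N → Q) → Q}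
    {E : Set (G ⧸ stabilizer G m₀)} (hE : DependsOn δ (Subtype.val ⁻¹' E)) (m : M) :
    DependsOn (fun c : M → Q => globalTrans m₀ coord N δ c m) (semiAct m₀ coord m '' E) :=
  fun _ _ hcc' => hE fun _ hn => hcc' _ (mem_image_of_mem _ hn)

variable (m₀ coord) in
def localRuleOf (Δ : (M → Q) → M → Q) (ℓ : ↥(univ : Set (G ⧸ stabilizer G m₀)) → Q) : Q :=
  Δ (fun m => ℓ ⟨QuotientGroup.mk (coord m), mem_univ _⟩) m₀

variable {Δ : (M → Q) → M → Q}

theorem localRuleOf_bulletAct (hc : ∀ m : M, coord m • m₀ = m)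
    (hΔ : ∀ h ∈ H, ∀ c : M → Q, Δ (shiftConf h c) = shiftConf h (Δ c))
    {h₀ : G} (hh₀ : h₀ ∈ H) (hs : h₀ ∈ stabilizer G m₀)
    (ℓ : ↥(univ : Set (G ⧸ stabilizer G m₀)) → Q) :
    localRuleOf m₀ coord Δ (bulletAct (fun _ _ _ _ => mem_univ _) h₀ hs ℓ) =
      localRuleOf m₀ coord Δ ℓ := by
  have hconf : (fun m => bulletAct (fun _ _ _ _ => mem_univ _) h₀ hs ℓ
        ⟨QuotientGroup.mk (coord m), mem_univ _⟩) =
      shiftConf h₀ fun m => ℓ ⟨QuotientGroup.mk (coord m), mem_univ _⟩ := by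
    funext m
    simp only [bulletAct, shiftConf, mk_coord_smul hc]
  rw [localRuleOf, hconf, hΔ h₀ hh₀, shiftConf, inv_smul_eq_iff.2 hs.symm, localRuleOf]

theorem dependsOn_localRuleOf {S : Set M} (hS : DependsOn (fun c => Δ c m₀) S) :
    DependsOn (localRuleOf m₀ coord Δ)
      (Subtype.val ⁻¹' ((fun m => (QuotientGroup.mk (coord m) : G ⧸ stabilizer G m₀)) '' S)) :=
  fun _ _ h => hS fun _ hm => h _ (mem_image_of_mem _ hm)

theorem globalTrans_localRuleOf (hc : ∀ m : M, coord m • m₀ = m) (hH : ∀ m : M, coord m ∈ H)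
    (hΔ : ∀ h ∈ H, ∀ c : M → Q, Δ (shiftConf h c) = shiftConf h (Δ c)) :
    globalTrans m₀ coord univ (localRuleOf m₀ coord Δ) = Δ := by
  funext c m
  have hconf : (fun m' => c (semiAct m₀ coord m (QuotientGroup.mk (coord m')))) =
      shiftConf (coord m)⁻¹ c := by
    funext m'
    rw [semiAct_mk_coord hc, shiftConf, inv_inv]
  change Δ (fun m' => c (semiAct m₀ coord m (QuotientGroup.mk (coord m')))) m₀ = Δ c m
  rw [hconf, hΔ _ (inv_mem (hH m)), shiftConf, inv_inv, hc]

end CellSpace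

theorem topological_curtis_hedlund_lyndon_general {G M : Type*} [Group G] [MulAction G M]
    (m₀ : M) (coord : M → G)
    (hc : ∀ m : M, coord m • m₀ = m)
    {Q : Type*} [Finite Q] (Δ : (M → Q) → (M → Q))
    (H : Subgroup G) (hH : ∀ m : M, coord m ∈ H) :
    (∃ (N : Set (G ⧸ stabilizer G m₀))
       (hN : ∀ g₀ ∈ stabilizer G m₀, ∀ n ∈ N, g₀ • n ∈ N)
       (δ : (N → Q) → Q),
        (∀ h₀ : G, h₀ ∈ H → ∀ hs : h₀ ∈ stabilizer G m₀,
          ∀ ℓ : N → Q, δ (bulletAct hN h₀ hs ℓ) = δ ℓ) ∧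
        (∃ E : Set (G ⧸ stabilizer G m₀), E ⊆ N ∧ E.Finite ∧
          ∀ ℓ ℓ' : N → Q,
            (∀ n : N, (n : G ⧸ stabilizer G m₀) ∈ E → ℓ n = ℓ' n) → δ ℓ = δ ℓ') ∧
        Δ = globalTrans m₀ coord N δ)
    ↔ ((∀ h ∈ H, ∀ c : M → Q, Δ (shiftConf h c) = shiftConf h (Δ c)) ∧
        @Continuous (M → Q) (M → Q)
          (prodiscreteTopology Q M) (prodiscreteTopology Q M) Δ) := by
  rw [continuous_prodiscrete_iff]
  constructor
  · rintro ⟨N, hN, δ, hδ, ⟨E, -, hE, hδE⟩, rfl⟩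
    exact ⟨fun h hh => globalTrans_shiftConf hc hH hN hδ hh,
      fun m => ⟨_, hE.image _, dependsOn_globalTrans_apply hδE m⟩⟩
  · rintro ⟨hΔ, hdep⟩
    obtain ⟨S, hS, hΔS⟩ := hdep m₀
    exact ⟨univ, fun _ _ _ _ => mem_univ _, localRuleOf m₀ coord Δ,
      fun h₀ hh₀ hs => localRuleOf_bulletAct hc hΔ hh₀ hs,
      ⟨_, subset_univ _, hS.image _, dependsOn_localRuleOf hΔS⟩,
      (globalTrans_localRuleOf hc hH hΔ).symm⟩

/-- **The topological Curtis–Hedlund–Lyndon theorem.**  Let `𝓡` be a cell space, let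
`Q` be a finite set, let `Q^M` carry the prodiscrete topology, let `Δ : Q^M → Q^M`
be a map, and let `H` be a subgroup of `G` with `{g_{m₀,m} : m ∈ M} ⊆ H`.  The
following are equivalent:
(1) `Δ` is the global transition function of a semi-cellular automaton `(Q, N, δ)`
over `𝓡` whose local transition function `δ` is `•_{H₀}`-invariant and which has a
finite essential neighbourhood;
(2) `Δ` is `⇀_H`-equivariant and continuous. -/
theorem topological_curtis_hedlund_lyndon {G M : Type*} [Group G] [MulAction G M]
    (htrans : ∀ m m' : M, ∃ g : G, g • m = m')
    (m₀ : M) (coord : M → G)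
    (hc : ∀ m : M, coord m • m₀ = m) (hc0 : coord m₀ = 1)
    {Q : Type*} [Finite Q] (Δ : (M → Q) → (M → Q))
    (H : Subgroup G) (hH : ∀ m : M, coord m ∈ H) :
    (∃ (N : Set (G ⧸ stabilizer G m₀))
       (hN : ∀ g₀ ∈ stabilizer G m₀, ∀ n ∈ N, g₀ • n ∈ N)
       (δ : (N → Q) → Q),
        (∀ h₀ : G, h₀ ∈ H → ∀ hs : h₀ ∈ stabilizer G m₀,
          ∀ ℓ : N → Q, δ (bulletAct hN h₀ hs ℓ) = δ ℓ) ∧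
        (∃ E : Set (G ⧸ stabilizer G m₀), E ⊆ N ∧ E.Finite ∧
          ∀ ℓ ℓ' : N → Q,
            (∀ n : N, (n : G ⧸ stabilizer G m₀) ∈ E → ℓ n = ℓ' n) → δ ℓ = δ ℓ') ∧
        Δ = globalTrans m₀ coord N δ)
    ↔ ((∀ h ∈ H, ∀ c : M → Q, Δ (shiftConf h c) = shiftConf h (Δ c)) ∧
        @Continuous (M → Q) (M → Q)
          (prodiscreteTopology Q M) (prodiscreteTopology Q M) Δ) :=
  topological_curtis_hedlund_lyndon_general m₀ coord hc Δ H hH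
end
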